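/- Let V be a real vector space of dimension 2g with a nondegenerate alternating bilinear form M admitting a symplectic basis (ℓ_1,…,ℓ_{2g}) with M(ℓ_i, ℓ_{g+j}) = δ_{ij}, M(ℓ_i,ℓ_j) = M(ℓ_{g+i},ℓ_{g+j}) = 0 for 1 ≤ i,j ≤ g. Let (λ_1,…,λ_{2g}) be the dual basis, and set λ_{2g+j} = -λ_j for j = 1,…,g. Let M_k be the induced alternating form on ⋀^{2k+1}V defined by M_k(a_1∧…∧a_{2k+1}, b_1∧…∧b_{2k+1}) = det(M(a_i,b_j)). Then, viewing M_k as an element ω_k of ⋀²(⋀^{2k+1}V)*, one has 2ω_k = Σ_{1≤i_1<…<i_{2k+1}≤2g} λ_{i_1}∧…∧λ_{i_{2k+1}} ∧ λ_{g+i_1}∧…∧λ_{g+i_{2k+1}}. -/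

import Mathlib

open scoped BigOperators

open Matrix Finset Equiv Equiv.Perm Function

variable {n m : ℕ}

private lemma cbT_zero (A : Matrix (Fin n) (Fin m) ℝ) (B : Matrix (Fin m) (Fin n) ℝ)
    {p : Fin n → Fin m} (H : ¬Function.Injective p) :
    (∑ σ : Perm (Fin n), (Equiv.Perm.sign σ : ℝ) * ∏ x, A (σ x) (p x) * B (p x) x) = 0 := by
  obtain ⟨i, j, hpij, hij⟩ : ∃ i j, p i = p j ∧ i ≠ j := by
    rw [Function.Injective] at H
    push_neg at H
    obtain ⟨i, j, h1, h2⟩ := H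
    exact ⟨i, j, h1, h2⟩
  exact
    sum_involution (fun σ _ => σ * Equiv.swap i j)
      (fun σ _ => by
        have : (∏ x, A (σ x) (p x)) = ∏ x, A ((σ * Equiv.swap i j) x) (p x) :=
          Fintype.prod_equiv (Equiv.swap i j) _ _ (by simp [Equiv.apply_swap_eq_self hpij])
        simp [this, sign_swap hij, -sign_swap', prod_mul_distrib])
      (fun σ _ _ => (not_congr mul_swap_eq_iff).mpr hij) (fun _ _ => mem_univ _) fun σ _ =>
      mul_swap_involutive i j σ

private lemma cb_expand (A : Matrix (Fin n) (Fin m) ℝ) (B : Matrix (Fin m) (Fin n) ℝ) :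
    (A * B).det = ∑ p : Fin n → Fin m,
      ∑ σ : Perm (Fin n), (Equiv.Perm.sign σ : ℝ) * ∏ i, A (σ i) (p i) * B (p i) i := by
  simp only [det_apply', Matrix.mul_apply, prod_univ_sum, mul_sum, Fintype.piFinset_univ]
  rw [Finset.sum_comm]


theorem cauchyBinet (A : Matrix (Fin n) (Fin m) ℝ) (B : Matrix (Fin m) (Fin n) ℝ) :
    (A * B).det = ∑ s : Finset (Fin m), if hs : s.card = n then
      (A.submatrix id (s.orderEmbOfFin hs)).det * (B.submatrix (s.orderEmbOfFin hs) id).det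
    else 0 := by
  set T : (Fin n → Fin m) → ℝ := fun p =>
    ∑ σ : Perm (Fin n), (Equiv.Perm.sign σ : ℝ) * ∏ i, A (σ i) (p i) * B (p i) i with hT
  have h1 : (A * B).det = ∑ p ∈ univ.filter (fun p : Fin n → Fin m => Function.Injective p), T p := by
    rw [cb_expand]
    refine (sum_subset (filter_subset _ _) fun p _ hp => cbT_zero A B ?_).symm
    simpa using hp
  have h2 : ∀ (s : Finset (Fin m)) (hs : s.card = n),
      (A.submatrix id (s.orderEmbOfFin hs)).det * (B.submatrix (s.orderEmbOfFin hs) id).det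
        = ∑ q ∈ univ.filter (fun q : Fin n → Fin n => Function.Bijective q),
            T (s.orderEmbOfFin hs ∘ q) := by
    intro s hs
    rw [← det_mul, cb_expand]
    have e1 : ∑ q ∈ univ.filter (fun q : Fin n → Fin n => Function.Bijective q),
        (∑ σ : Perm (Fin n), (Equiv.Perm.sign σ : ℝ) *
          ∏ i, (A.submatrix id (s.orderEmbOfFin hs)) (σ i) (q i)
            * (B.submatrix (s.orderEmbOfFin hs) id) (q i) i)
        = ∑ q : Fin n → Fin n,
        (∑ σ : Perm (Fin n), (Equiv.Perm.sign σ : ℝ) *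
          ∏ i, (A.submatrix id (s.orderEmbOfFin hs)) (σ i) (q i)
            * (B.submatrix (s.orderEmbOfFin hs) id) (q i) i) := by
      refine sum_subset (filter_subset _ _) fun q _ hq => ?_
      have hni : ¬ Function.Injective (s.orderEmbOfFin hs ∘ q) := by
        intro h
        have hnb : ¬ Function.Bijective q := by simpa using hq
        exact hnb ((Finite.injective_iff_bijective).mp
          (fun x y hxy => h (by simp [Function.comp, hxy])))
      simpa [Function.comp, Matrix.submatrix_apply] using cbT_zero A B hni
    rw [← e1]
    refine Finset.sum_congr rfl fun q _ => ?_
    simp [hT, Function.comp, Matrix.submatrix_apply]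
  -- the product index set
  set P := (univ.filter (fun s : Finset (Fin m) => s.card = n)) ×ˢ
      (univ.filter (fun q : Fin n → Fin n => Function.Bijective q)) with hP
  have key : ∑ x ∈ P, (if h : x.1.card = n then T (x.1.orderEmbOfFin h ∘ x.2) else 0)
      = ∑ p ∈ univ.filter (fun p : Fin n → Fin m => Function.Injective p), T p := by
    refine Finset.sum_bij'
      (i := fun (x : Finset (Fin m) × (Fin n → Fin n)) (hx : x ∈ P) =>
        x.1.orderEmbOfFin (show x.1.card = n by simpa using (Finset.mem_product.mp hx).1) ∘ x.2)
      (j := fun (p : Fin n → Fin m) (hp : p ∈ univ.filter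
          (fun p : Fin n → Fin m => Function.Injective p)) =>
        (⟨Finset.image p univ, fun i => ((Finset.image p univ).orderIsoOfFin
          (show (Finset.image p univ).card = n by
            rw [Finset.card_image_of_injective _ (by simpa using hp), card_univ,
              Fintype.card_fin])).symm ⟨p i, Finset.mem_image_of_mem p (mem_univ i)⟩⟩))
      ?_ ?_ ?_ ?_ ?_
    · intro x hx
      obtain ⟨hc, hb⟩ := Finset.mem_product.mp hx
      simp only [mem_filter, mem_univ, true_and] at hb ⊢
      exact fun i j hij => hb.injective ((x.1.orderEmbOfFin _).injective hij)
    · intro p hp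
      have hpi : Function.Injective p := by simpa using hp
      refine Finset.mem_product.mpr ⟨?_, ?_⟩
      · rw [mem_filter]
        exact ⟨mem_univ _, by rw [Finset.card_image_of_injective _ hpi, card_univ,
          Fintype.card_fin]⟩
      · simp only [mem_filter, mem_univ, true_and]
        refine (Finite.injective_iff_bijective).mp fun i j hij => ?_
        have h := congrArg (fun z => (((Finset.image p univ).orderIsoOfFin
          (show (Finset.image p univ).card = n by
            rw [Finset.card_image_of_injective _ hpi, card_univ, Fintype.card_fin])) z : Fin m)) hij
        simp only [OrderIso.apply_symm_apply] at h
        exact hpi h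
    · intro x hx
      obtain ⟨hc', hb'⟩ := Finset.mem_product.mp hx
      have hcard : x.1.card = n := by simpa using hc'
      have hb : Function.Bijective x.2 := by simpa using hb'
      have him : Finset.image (x.1.orderEmbOfFin hcard ∘ x.2) univ = x.1 := by
        rw [← Finset.image_image, Finset.image_univ_of_surjective hb.surjective]
        rw [← Finset.coe_inj, Finset.coe_image, Finset.coe_univ, Set.image_univ,
          range_orderEmbOfFin]
      refine Prod.ext him ?_
      funext i
      have hgen : ∀ (t : Finset (Fin m)) (htt : t = x.1) (ht : t.card = n)
          (hy : (x.1.orderEmbOfFin hcard ∘ x.2) i ∈ t),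
          ((t.orderIsoOfFin ht).symm ⟨(x.1.orderEmbOfFin hcard ∘ x.2) i, hy⟩ : Fin n) = x.2 i := by
        intro t htt
        subst htt
        intro ht hy
        have hsub : (⟨(x.1.orderEmbOfFin hcard ∘ x.2) i, hy⟩ : {z // z ∈ x.1})
            = x.1.orderIsoOfFin ht (x.2 i) := by
          apply Subtype.ext
          simp only [coe_orderIsoOfFin_apply]
          rfl
        rw [hsub, OrderIso.symm_apply_apply]
      exact hgen _ him _ _
    · intro p hp
      funext i
      have hpi : Function.Injective p := by simpa using hp
      simp only [Function.comp]
      rw [← coe_orderIsoOfFin_apply, OrderIso.apply_symm_apply]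
    · intro x hx
      rw [dif_pos (by simpa using (Finset.mem_product.mp hx).1)]
  rw [h1, ← key, hP, Finset.sum_product]
  rw [← Finset.sum_filter_add_sum_filter_not univ (fun s : Finset (Fin m) => s.card = n)]
  have h4 : ∑ s ∈ univ.filter (fun s : Finset (Fin m) => ¬ s.card = n),
      (if hs : s.card = n then
        (A.submatrix id (s.orderEmbOfFin hs)).det * (B.submatrix (s.orderEmbOfFin hs) id).det
       else 0) = 0 :=
    Finset.sum_eq_zero fun s hs => dif_neg (by simpa using (mem_filter.mp hs).2)
  rw [h4, add_zero]
  refine Finset.sum_congr rfl fun s hs => ?_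
  have hsc : s.card = n := by simpa using (mem_filter.mp hs).2
  rw [dif_pos hsc, h2 s hsc]
  refine Finset.sum_congr rfl fun q hq => ?_
  rw [dif_pos hsc]

/-- **Morita/de Jong, Proposition 2.1 (`pre-explicit`).**
Let `V` be a real vector space of dimension `2g` with a nondegenerate alternating bilinear
form `M` admitting a symplectic basis `ℓ`, and let `lam` be the dual basis, extended by the
convention `lam (2g + j) = - lam j` for `j < g`.  The induced form `M_k` on `⋀^{2k+1} V` is
given on decomposables by the Gram determinant `det (M (a i) (b j))`.  Evaluating the
identity `2 ω_k = ∑_{i₁ < … < i_{2k+1}} λ_{i₁} ∧ … ∧ λ_{i_{2k+1}} ∧ λ_{g+i₁} ∧ … ∧ λ_{g+i_{2k+1}}`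
of elements of `⋀²(⋀^{2k+1}V)*` on a pair of decomposable vectors `a₁∧…∧a_{2k+1}`,
`b₁∧…∧b_{2k+1}` yields the following determinant identity. -/
theorem stmt0 (g k : ℕ) (hg : 1 ≤ g)
    (V : Type*) [AddCommGroup V] [Module ℝ V]
    (ℓ : Module.Basis (Fin (2 * g)) ℝ V)
    (M : V →ₗ[ℝ] V →ₗ[ℝ] ℝ)
    (hMalt : ∀ v : V, M v v = 0)
    (hM1 : ∀ i j : Fin g,
      M (ℓ ⟨i, by have := i.isLt; omega⟩) (ℓ ⟨g + j, by have := j.isLt; omega⟩)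
        = if i = j then 1 else 0)
    (hM2 : ∀ i j : Fin g,
      M (ℓ ⟨i, by have := i.isLt; omega⟩) (ℓ ⟨j, by have := j.isLt; omega⟩) = 0)
    (hM3 : ∀ i j : Fin g,
      M (ℓ ⟨g + i, by have := i.isLt; omega⟩) (ℓ ⟨g + j, by have := j.isLt; omega⟩) = 0)
    (lam : ℕ → (V →ₗ[ℝ] ℝ))
    (hlam : ∀ i : Fin (2 * g), lam i = ℓ.coord i)
    (hlamext : ∀ j : Fin g, lam (2 * g + j) = - lam j) :
    ∀ a b : Fin (2 * k + 1) → V,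
      2 * Matrix.det (Matrix.of fun i j : Fin (2 * k + 1) => M (a i) (b j)) =
        ∑ s : Finset (Fin (2 * g)),
          if hs : s.card = 2 * k + 1 then
            Matrix.det (Matrix.of fun i j : Fin (2 * k + 1) =>
                lam ((s.orderIsoOfFin hs i : Fin (2 * g)) : ℕ) (a j))
              * Matrix.det (Matrix.of fun i j : Fin (2 * k + 1) =>
                lam (g + ((s.orderIsoOfFin hs i : Fin (2 * g)) : ℕ)) (b j))
            - Matrix.det (Matrix.of fun i j : Fin (2 * k + 1) =>
                lam ((s.orderIsoOfFin hs i : Fin (2 * g)) : ℕ) (b j))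
              * Matrix.det (Matrix.of fun i j : Fin (2 * k + 1) =>
                lam (g + ((s.orderIsoOfFin hs i : Fin (2 * g)) : ℕ)) (a j))
          else 0 := by

  -- Skew-symmetry of `M`.
  have hskew : ∀ v w : V, M v w = - M w v := by
    intro v w
    have h0 := hMalt (v + w)
    simp only [map_add, LinearMap.add_apply, hMalt v, hMalt w] at h0
    linarith
  -- values of `lam` on basis vectors
  have hcoordB : ∀ p i : Fin (2 * g), lam (p : ℕ) (ℓ i) = if p = i then 1 else 0 := by
    intro p i
    rw [hlam p, Module.Basis.coord_apply, Module.Basis.repr_self, Finsupp.single_apply]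
    simp [eq_comm]
  -- The key bilinear identity.
  have hM' : M = ∑ p : Fin (2 * g), (lam (p : ℕ)).smulRight (lam (g + (p : ℕ))) := by
    refine ℓ.ext fun i => ℓ.ext fun j => ?_
    have hR : (∑ p : Fin (2 * g), (lam (p : ℕ)).smulRight (lam (g + (p : ℕ)))) (ℓ i) (ℓ j)
        = ∑ p : Fin (2 * g), lam (p : ℕ) (ℓ i) * lam (g + (p : ℕ)) (ℓ j) := by
      simp [LinearMap.sum_apply, LinearMap.smulRight_apply, smul_eq_mul]
    rw [hR, Finset.sum_eq_single i
      (fun p _ hpi => by rw [hcoordB p i, if_neg hpi, zero_mul])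
      (fun h => absurd (Finset.mem_univ i) h)]
    rw [hcoordB i i, if_pos rfl, one_mul]
    rcases lt_or_ge (i : ℕ) g with hi | hi
    · have hgi : g + (i : ℕ) < 2 * g := by omega
      have h1 : lam (g + (i : ℕ)) (ℓ j) = if (⟨g + (i : ℕ), hgi⟩ : Fin (2 * g)) = j
          then 1 else 0 := hcoordB ⟨g + (i : ℕ), hgi⟩ j
      rcases lt_or_ge (j : ℕ) g with hj | hj
      · rw [h1, if_neg (by
          intro h
          have : g + (i : ℕ) = (j : ℕ) := by rw [← h]
          omega)]
        have := hM2 ⟨(i : ℕ), hi⟩ ⟨(j : ℕ), hj⟩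
        simpa [Fin.eta] using this
      · have hj2 : (j : ℕ) - g < g := by have := j.isLt; omega
        have := hM1 ⟨(i : ℕ), hi⟩ ⟨(j : ℕ) - g, hj2⟩
        have hjj : (⟨g + ((j : ℕ) - g), by omega⟩ : Fin (2 * g)) = j := by
          apply Fin.ext; simp <;> omega
        rw [show (⟨((⟨(i : ℕ), hi⟩ : Fin g) : ℕ), by omega⟩ : Fin (2 * g)) = i from by
            apply Fin.ext; rfl] at this
        rw [hjj] at this
        rw [this, h1]
        have hiff : (⟨g + (i : ℕ), hgi⟩ : Fin (2 * g)) = j ↔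
            (⟨(i : ℕ), hi⟩ : Fin g) = ⟨(j : ℕ) - g, hj2⟩ := by
          constructor
          · intro h
            apply Fin.ext
            have : g + (i : ℕ) = (j : ℕ) := by rw [← h]
            simp <;> omega
          · intro h
            apply Fin.ext
            have : (i : ℕ) = (j : ℕ) - g := by
              have := congrArg (fun z : Fin g => (z : ℕ)) h; simpa using this
            simp <;> omega
        by_cases hc : (⟨(i : ℕ), hi⟩ : Fin g) = ⟨(j : ℕ) - g, hj2⟩
        · rw [if_pos (hiff.mpr hc), if_pos hc]
        · rw [if_neg (fun h => hc (hiff.mp h)), if_neg hc]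
    · -- i ≥ g
      have hi2 : (i : ℕ) - g < g := by have := i.isLt; omega
      have hsplit : g + (i : ℕ) = 2 * g + ((i : ℕ) - g) := by omega
      have h2 : lam (g + (i : ℕ)) (ℓ j) = - lam ((i : ℕ) - g) (ℓ j) := by
        rw [hsplit]
        have := hlamext ⟨(i : ℕ) - g, hi2⟩
        rw [show ((⟨(i : ℕ) - g, hi2⟩ : Fin g) : ℕ) = (i : ℕ) - g from rfl] at this
        rw [this, LinearMap.neg_apply]
      have h3 : lam ((i : ℕ) - g) (ℓ j) = if (⟨(i : ℕ) - g, by omega⟩ : Fin (2 * g)) = j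
          then 1 else 0 := hcoordB ⟨(i : ℕ) - g, by omega⟩ j
      rw [h2, h3]
      rcases lt_or_ge (j : ℕ) g with hj | hj
      · -- M(ℓ i)(ℓ j) = -M(ℓ j)(ℓ i) = -δ
        have hji := hM1 ⟨(j : ℕ), hj⟩ ⟨(i : ℕ) - g, hi2⟩
        have hii : (⟨g + ((i : ℕ) - g), by omega⟩ : Fin (2 * g)) = i := by
          apply Fin.ext; simp <;> omega
        rw [show (⟨((⟨(j : ℕ), hj⟩ : Fin g) : ℕ), by omega⟩ : Fin (2 * g)) = j from by
            apply Fin.ext; rfl] at hji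
        rw [hii] at hji
        rw [hskew (ℓ i) (ℓ j), hji]
        have hiff : (⟨(i : ℕ) - g, by omega⟩ : Fin (2 * g)) = j ↔
            (⟨(j : ℕ), hj⟩ : Fin g) = ⟨(i : ℕ) - g, hi2⟩ := by
          constructor
          · intro h
            apply Fin.ext
            have : (i : ℕ) - g = (j : ℕ) := by rw [← h]
            simp [this]
          · intro h
            apply Fin.ext
            have : (j : ℕ) = (i : ℕ) - g := by
              have := congrArg (fun z : Fin g => (z : ℕ)) h; simpa using this
            simp <;> omega
        by_cases hc : (⟨(j : ℕ), hj⟩ : Fin g) = ⟨(i : ℕ) - g, hi2⟩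
        · rw [if_pos (hiff.mpr hc), if_pos hc] <;> norm_num
        · rw [if_neg (fun h => hc (hiff.mp h)), if_neg hc] <;> norm_num
      · -- both in second half: 0
        have := hM3 ⟨(i : ℕ) - g, hi2⟩ ⟨(j : ℕ) - g, by have := j.isLt; omega⟩
        have hii : (⟨g + ((i : ℕ) - g), by omega⟩ : Fin (2 * g)) = i := by
          apply Fin.ext; simp <;> omega
        have hjj : (⟨g + ((j : ℕ) - g), by omega⟩ : Fin (2 * g)) = j := by
          apply Fin.ext; simp <;> omega
        rw [hii, hjj] at this
        rw [this, if_neg (by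
          intro h
          have : (i : ℕ) - g = (j : ℕ) := by rw [← h]
          omega)]
        norm_num
  have hMeq : ∀ v w : V, M v w = ∑ p : Fin (2 * g), lam (p : ℕ) v * lam (g + (p : ℕ)) w := by
    intro v w
    rw [hM']
    simp [LinearMap.sum_apply, LinearMap.smulRight_apply, smul_eq_mul]
  intro a b
  set Aa : Matrix (Fin (2 * k + 1)) (Fin (2 * g)) ℝ := Matrix.of fun i p => lam (p : ℕ) (a i) with hAa
  set Bb : Matrix (Fin (2 * g)) (Fin (2 * k + 1)) ℝ := Matrix.of fun p j => lam (g + (p : ℕ)) (b j) with hBb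
  set Ab : Matrix (Fin (2 * k + 1)) (Fin (2 * g)) ℝ := Matrix.of fun i p => lam (p : ℕ) (b i) with hAb
  set Ba : Matrix (Fin (2 * g)) (Fin (2 * k + 1)) ℝ := Matrix.of fun p j => lam (g + (p : ℕ)) (a j) with hBa
  set D : Matrix (Fin (2 * k + 1)) (Fin (2 * k + 1)) ℝ := Matrix.of fun i j => M (a i) (b j) with hD
  have hABD : Aa * Bb = D := by
    ext i j
    rw [Matrix.mul_apply]
    simp only [hAa, hBb, hD, Matrix.of_apply]
    exact (hMeq (a i) (b j)).symm
  have hABD' : Ab * Ba = - D.transpose := by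
    ext i j
    rw [Matrix.mul_apply]
    simp only [hAb, hBa, hD, Matrix.neg_apply, Matrix.transpose_apply, Matrix.of_apply]
    rw [← hMeq (b i) (a j)]
    exact hskew (b i) (a j)
  have hRHS : ∀ s : Finset (Fin (2 * g)),
      (if hs : s.card = 2 * k + 1 then
        Matrix.det (Matrix.of fun i j : Fin (2 * k + 1) =>
            lam ((s.orderIsoOfFin hs i : Fin (2 * g)) : ℕ) (a j))
          * Matrix.det (Matrix.of fun i j : Fin (2 * k + 1) =>
            lam (g + ((s.orderIsoOfFin hs i : Fin (2 * g)) : ℕ)) (b j))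
        - Matrix.det (Matrix.of fun i j : Fin (2 * k + 1) =>
            lam ((s.orderIsoOfFin hs i : Fin (2 * g)) : ℕ) (b j))
          * Matrix.det (Matrix.of fun i j : Fin (2 * k + 1) =>
            lam (g + ((s.orderIsoOfFin hs i : Fin (2 * g)) : ℕ)) (a j))
        else 0)
      = (if hs : s.card = 2 * k + 1 then
          (Aa.submatrix id (s.orderEmbOfFin hs)).det * (Bb.submatrix (s.orderEmbOfFin hs) id).det
        else 0)
        - (if hs : s.card = 2 * k + 1 then
          (Ab.submatrix id (s.orderEmbOfFin hs)).det * (Ba.submatrix (s.orderEmbOfFin hs) id).det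
        else 0) := by
    intro s
    by_cases hs : s.card = 2 * k + 1
    · rw [dif_pos hs, dif_pos hs, dif_pos hs]
      have e1 : Matrix.det (Matrix.of fun i j : Fin (2 * k + 1) =>
          lam ((s.orderIsoOfFin hs i : Fin (2 * g)) : ℕ) (a j))
          = (Aa.submatrix id (s.orderEmbOfFin hs)).det := by
        rw [← Matrix.det_transpose (Aa.submatrix id (s.orderEmbOfFin hs))]
        refine congrArg Matrix.det ?_
        ext i j
        simp [hAa, Matrix.submatrix_apply, Matrix.transpose_apply, coe_orderIsoOfFin_apply]
      have e2 : Matrix.det (Matrix.of fun i j : Fin (2 * k + 1) =>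
          lam (g + ((s.orderIsoOfFin hs i : Fin (2 * g)) : ℕ)) (b j))
          = (Bb.submatrix (s.orderEmbOfFin hs) id).det := by
        refine congrArg Matrix.det ?_
        ext i j
        simp [hBb, Matrix.submatrix_apply, coe_orderIsoOfFin_apply]
      have e3 : Matrix.det (Matrix.of fun i j : Fin (2 * k + 1) =>
          lam ((s.orderIsoOfFin hs i : Fin (2 * g)) : ℕ) (b j))
          = (Ab.submatrix id (s.orderEmbOfFin hs)).det := by
        rw [← Matrix.det_transpose (Ab.submatrix id (s.orderEmbOfFin hs))]
        refine congrArg Matrix.det ?_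
        ext i j
        simp [hAb, Matrix.submatrix_apply, Matrix.transpose_apply, coe_orderIsoOfFin_apply]
      have e4 : Matrix.det (Matrix.of fun i j : Fin (2 * k + 1) =>
          lam (g + ((s.orderIsoOfFin hs i : Fin (2 * g)) : ℕ)) (a j))
          = (Ba.submatrix (s.orderEmbOfFin hs) id).det := by
        refine congrArg Matrix.det ?_
        ext i j
        simp [hBa, Matrix.submatrix_apply, coe_orderIsoOfFin_apply]
      rw [e1, e2, e3, e4]
    · rw [dif_neg hs, dif_neg hs, dif_neg hs]; ring
  calc 2 * D.det
      = (Aa * Bb).det - (Ab * Ba).det := by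
        rw [hABD, hABD']
        have : (-D.transpose).det = - D.det := by
          rw [show (-D.transpose) = (-1 : ℝ) • D.transpose from by ext i j; simp,
            Matrix.det_smul, Matrix.det_transpose, Fintype.card_fin]
          rw [Odd.neg_one_pow ⟨k, by ring⟩]
          ring
        rw [this]
        ring
    _ = ∑ s : Finset (Fin (2 * g)),
          ((if hs : s.card = 2 * k + 1 then
            (Aa.submatrix id (s.orderEmbOfFin hs)).det * (Bb.submatrix (s.orderEmbOfFin hs) id).det
          else 0)
          - (if hs : s.card = 2 * k + 1 then
            (Ab.submatrix id (s.orderEmbOfFin hs)).det * (Ba.submatrix (s.orderEmbOfFin hs) id).det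
          else 0)) := by
        rw [Finset.sum_sub_distrib, ← cauchyBinet Aa Bb, ← cauchyBinet Ab Ba]
    _ = _ := by
        exact Finset.sum_congr rfl fun s _ => (hRHS s).symm
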